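/- arXiv:1010.2420 — 2 statements merged into one kernel-verified Lean document; each statement's English description precedes it below -/
import Mathlib

section
/- In a generalized reachability game with singleton reachability sets {v_1},...,{v_k}, if there exist i ≠ j with v_i ∉ Attr(v_j) and v_j ∉ Attr(v_i), then Adam wins from every vertex, using a strategy with at most 2 memory states: once one of v_i, v_j is visited, Adam forever avoids the attractor of the other. -/
/-- An arena: a directed graph with every vertex having a successor,
and a partition of vertices between Eve (`eve v`) and Adam (`¬ eve v`). -/
structure Arena (V : Type) where
  E : V → V → Prop
  eve : V → Prop
  succ_exists : ∀ v, ∃ w, E v w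

variable {V M : Type}

/-- A play from `v0`: an infinite path starting at `v0`. -/
def IsPlay (A : Arena V) (v0 : V) (π : ℕ → V) : Prop :=
  π 0 = v0 ∧ ∀ n, A.E (π n) (π (n + 1))

/-- The finite history of a play up to time `n` (inclusive). -/
def hist (π : ℕ → V) (n : ℕ) : List V :=
  List.ofFn (fun i : Fin (n + 1) => π i)

/-- A strategy (a function from histories to vertices) is legal if it always moves along edges. -/
def Legal (A : Arena V) (σ : List V → V) : Prop :=
  ∀ (l : List V) (v : V), A.E v (σ (l ++ [v]))

/-- A play is consistent with Eve's strategy `σ`. -/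
def ConsistentEve (A : Arena V) (σ : List V → V) (π : ℕ → V) : Prop :=
  ∀ n, A.eve (π n) → π (n + 1) = σ (hist π n)

/-- A play is consistent with Adam's strategy `τ`. -/
def ConsistentAdam (A : Arena V) (τ : List V → V) (π : ℕ → V) : Prop :=
  ∀ n, ¬ A.eve (π n) → π (n + 1) = τ (hist π n)

/-- The generalized reachability objective: visit each `F i` at least once. -/
def GenReach {k : ℕ} (F : Fin k → Set V) (π : ℕ → V) : Prop :=
  ∀ i, ∃ n, π n ∈ F i

/-- Eve wins the generalized reachability game from `v0`. -/
def EveWinsGenReach {k : ℕ} (A : Arena V) (F : Fin k → Set V) (v0 : V) : Prop :=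
  ∃ σ, Legal A σ ∧ ∀ π, IsPlay A v0 π → ConsistentEve A σ π → GenReach F π

/-- Adam wins the generalized reachability game from `v0`. -/
def AdamWinsGenReach {k : ℕ} (A : Arena V) (F : Fin k → Set V) (v0 : V) : Prop :=
  ∃ τ, Legal A τ ∧ ∀ π, IsPlay A v0 π → ConsistentAdam A τ π → ¬ GenReach F π

/-- One step of the attractor computation. -/
def AttrStep (A : Arena V) (X : Set V) : Set V :=
  X ∪ {u | A.eve u ∧ ∃ v, A.E u v ∧ v ∈ X} ∪ {u | ¬ A.eve u ∧ ∀ v, A.E u v → v ∈ X}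

/-- The attractor sequence `Attr_i(F)`. -/
def AttrSeq (A : Arena V) (F : Set V) : ℕ → Set V
  | 0 => F
  | n + 1 => AttrStep A (AttrSeq A F n)

/-- The attractor `Attr(F)`: union of the attractor sequence. -/
def Attr (A : Arena V) (F : Set V) : Set V := ⋃ n, AttrSeq A F n

/-- A memory structure: initial memory state and update function on edges. -/
structure MemStruct (V M : Type) where
  m0 : M
  upd : M → V → V → M

/-- The sequence of memory states along a play. -/
def memTrace (μ : MemStruct V M) (π : ℕ → V) : ℕ → M
  | 0 => μ.m0
  | n + 1 => μ.upd (memTrace μ π n) (π n) (π (n + 1))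

/-- A next-move function is legal if it always moves along edges. -/
def MemLegal (A : Arena V) (ν : V → M → V) : Prop :=
  ∀ v m, A.E v (ν v m)

/-- Consistency of a play with Eve's finite-memory strategy `(μ, ν)`. -/
def MemConsistentEve (A : Arena V) (μ : MemStruct V M) (ν : V → M → V) (π : ℕ → V) : Prop :=
  ∀ n, A.eve (π n) → π (n + 1) = ν (π n) (memTrace μ π n)

/-- Consistency of a play with Adam's finite-memory strategy `(μ, ν)`. -/
def MemConsistentAdam (A : Arena V) (μ : MemStruct V M) (ν : V → M → V) (π : ℕ → V) : Prop :=
  ∀ n, ¬ A.eve (π n) → π (n + 1) = ν (π n) (memTrace μ π n)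

/-- Eve wins with the finite-memory strategy `(μ, ν)` from `v0`. -/
def EveWinsWithMem {k : ℕ} (A : Arena V) (F : Fin k → Set V) (v0 : V)
    (μ : MemStruct V M) (ν : V → M → V) : Prop :=
  MemLegal A ν ∧ ∀ π, IsPlay A v0 π → MemConsistentEve A μ ν π → GenReach F π

/-- Adam wins with the finite-memory strategy `(μ, ν)` from `v0`. -/
def AdamWinsWithMem {k : ℕ} (A : Arena V) (F : Fin k → Set V) (v0 : V)
    (μ : MemStruct V M) (ν : V → M → V) : Prop :=
  MemLegal A ν ∧ ∀ π, IsPlay A v0 π → MemConsistentAdam A μ ν π → ¬ GenReach F π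


open Classical

lemma attrSeq_mono (A : Arena V) (F : Set V) : Monotone (AttrSeq A F) := by
  apply monotone_nat_of_le_succ
  intro n
  intro x hx
  exact Or.inl (Or.inl hx)

lemma subset_attr (A : Arena V) (F : Set V) : F ⊆ Attr A F :=
  Set.subset_iUnion (AttrSeq A F) 0

lemma attrSeq_subset_attr (A : Arena V) (F : Set V) (n : ℕ) :
    AttrSeq A F n ⊆ Attr A F :=
  Set.subset_iUnion (AttrSeq A F) n

lemma eve_step (A : Arena V) {F : Set V} {u w : V}
    (hu : u ∉ Attr A F) (he : A.eve u) (hw : A.E u w) : w ∉ Attr A F := by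
  intro hwA
  obtain ⟨n, hn⟩ := Set.mem_iUnion.mp hwA
  exact hu (attrSeq_subset_attr A F (n + 1)
    (Or.inl (Or.inr ⟨he, w, hw, hn⟩)))

lemma adam_step [Fintype V] (A : Arena V) {F : Set V} {u : V}
    (hu : u ∉ Attr A F) (ha : ¬ A.eve u) : ∃ w, A.E u w ∧ w ∉ Attr A F := by
  by_contra h
  push_neg at h
  have hall : ∀ w, A.E u w → w ∈ Attr A F := h
  set f : V → ℕ := fun w =>
    if hw : w ∈ Attr A F then (Set.mem_iUnion.mp hw).choose else 0 with hf
  set N : ℕ := Finset.univ.sup f with hN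
  have hbound : ∀ w, A.E u w → w ∈ AttrSeq A F N := by
    intro w hw
    have hwA := hall w hw
    have h1 : w ∈ AttrSeq A F (f w) := by
      simp only [hf, dif_pos hwA]
      exact (Set.mem_iUnion.mp hwA).choose_spec
    exact attrSeq_mono A F (Finset.le_sup (Finset.mem_univ w)) h1
  exact hu (attrSeq_subset_attr A F (N + 1) (Or.inr ⟨ha, hbound⟩))

/-- Adam's next-move function: avoid the attractor of `X m` when possible. -/
noncomputable def advNu (A : Arena V) (X : Bool → Set V) : V → Bool → V :=
  fun w m =>
    if h : ∃ x, A.E w x ∧ x ∉ Attr A (X m) then h.choose else (A.succ_exists w).choose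

lemma advNu_legal (A : Arena V) (X : Bool → Set V) : MemLegal A (advNu A X) := by
  intro w m
  unfold advNu
  split
  · next h => exact h.choose_spec.1
  · exact (A.succ_exists w).choose_spec

lemma advNu_avoid [Fintype V] (A : Arena V) (X : Bool → Set V) {w : V} {m : Bool}
    (ha : ¬ A.eve w) (hw : w ∉ Attr A (X m)) : advNu A X w m ∉ Attr A (X m) := by
  have hex : ∃ x, A.E w x ∧ x ∉ Attr A (X m) := adam_step A hw ha
  unfold advNu
  rw [dif_pos hex]
  exact hex.choose_spec.2

/-- Adam's memory update: remember which of `a`, `b` was seen last. -/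
noncomputable def advUpd (a b : V) : Bool → V → V → Bool :=
  fun m _ w => if w = a then true else if w = b then false else m

/-- with singleton reachability sets, if two target vertices are mutually
outside each other's attractor, then Adam wins from every vertex with at most `2`
memory states. -/
theorem singleton_adam_wins_everywhere {V : Type} [Fintype V] {k : ℕ}
    (A : Arena V) (v : Fin k → V) (i j : Fin k) (hij : i ≠ j)
    (hi : v i ∉ Attr A {v j}) (hj : v j ∉ Attr A {v i}) :
    ∀ u : V, ∃ (M : Type) (inst : Fintype M) (μ : MemStruct V M) (ν : V → M → V),
      @Fintype.card M inst ≤ 2 ∧ AdamWinsWithMem A (fun l => {v l}) u μ ν := by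
  intro u
  classical
  have hvij : v i ≠ v j := by
    intro h
    exact hi (h ▸ subset_attr A {v j} rfl)
  set X : Bool → Set V := fun m => if m then ({v j} : Set V) else {v i} with hX
  set ν : V → Bool → V := advNu A X with hν
  set μ : MemStruct V Bool := ⟨if u = v i then true else false, advUpd (v i) (v j)⟩ with hμ
  refine ⟨Bool, inferInstance, μ, ν, by simp, advNu_legal A X, ?_⟩
  intro π hplay hcons hreach
  -- the one-step avoidance property
  have step : ∀ n, π n ∉ Attr A (X (memTrace μ π n)) →
      π (n + 1) ∉ Attr A (X (memTrace μ π n)) := by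
    intro n hn
    by_cases he : A.eve (π n)
    · exact eve_step A hn he (hplay.2 n)
    · rw [hcons n he]
      exact advNu_avoid A X he hn
  -- memory update description
  have updTrue : ∀ n, π (n + 1) = v i → memTrace μ π (n + 1) = true := by
    intro n h
    have e : memTrace μ π (n + 1)
        = advUpd (v i) (v j) (memTrace μ π n) (π n) (π (n + 1)) := rfl
    rw [e]; unfold advUpd; rw [if_pos h]
  have updFalse : ∀ n, π (n + 1) = v j → memTrace μ π (n + 1) = false := by
    intro n h
    have e : memTrace μ π (n + 1)
        = advUpd (v i) (v j) (memTrace μ π n) (π n) (π (n + 1)) := rfl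
    rw [e]; unfold advUpd
    rw [if_neg (h ▸ fun hh => hvij hh.symm), if_pos h]
  have updSame : ∀ n, π (n + 1) ≠ v i → π (n + 1) ≠ v j →
      memTrace μ π (n + 1) = memTrace μ π n := by
    intro n h1 h2
    have e : memTrace μ π (n + 1)
        = advUpd (v i) (v j) (memTrace μ π n) (π n) (π (n + 1)) := rfl
    rw [e]; unfold advUpd; rw [if_neg h1, if_neg h2]
  -- the invariant
  have inv : ∀ n,
      (memTrace μ π n = true ∧ π n ∉ Attr A {v j} ∧ ∀ m ≤ n, π m ≠ v j) ∨
      (memTrace μ π n = false ∧ ∀ m ≤ n, π m ≠ v i ∧ π m ≠ v j) ∨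
      (memTrace μ π n = false ∧ π n ∉ Attr A {v i} ∧ ∀ m ≤ n, π m ≠ v i) := by
    intro n
    induction n with
    | zero =>
        by_cases h1 : u = v i
        · left
          refine ⟨by simp [hμ, memTrace, h1], ?_, ?_⟩
          · rw [hplay.1, h1]; exact hi
          · intro m hm
            interval_cases m
            rw [hplay.1, h1]; exact hvij
        · by_cases h2 : u = v j
          · right; right
            refine ⟨by simp [hμ, memTrace, h1], ?_, ?_⟩
            · rw [hplay.1, h2]; exact hj
            · intro m hm
              interval_cases m
              rw [hplay.1, h2]
              exact fun hh => hvij hh.symm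
          · right; left
            refine ⟨by simp [hμ, memTrace, h1], ?_⟩
            intro m hm
            interval_cases m
            rw [hplay.1]
            exact ⟨h1, h2⟩
    | succ n ih =>
        have hle : ∀ P : ℕ → Prop, (∀ m ≤ n, P m) → P (n + 1) →
            ∀ m ≤ n + 1, P m := by
          intro P hP hP1 m hm
          rcases Nat.lt_or_ge m (n + 1) with hlt | hge
          · exact hP m (Nat.lt_succ_iff.mp hlt)
          · have : m = n + 1 := le_antisymm hm hge
            rw [this]; exact hP1
        rcases ih with ⟨hmem, hout, hnot⟩ | ⟨hmem, hnot⟩ | ⟨hmem, hout, hnot⟩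
        · -- seen `v i` last: stays outside Attr {v j}
          have hXeq : X (memTrace μ π n) = {v j} := by rw [hmem]; simp [hX]
          have hstep : π (n + 1) ∉ Attr A {v j} := by
            have := step n (by rw [hXeq]; exact hout)
            rwa [hXeq] at this
          have hnj : π (n + 1) ≠ v j := fun h =>
            hstep (h ▸ subset_attr A {v j} rfl)
          left
          refine ⟨?_, hstep, hle _ hnot hnj⟩
          by_cases hni : π (n + 1) = v i
          · exact updTrue n hni
          · rw [updSame n hni hnj]; exact hmem
        · -- nothing seen yet
          by_cases hni : π (n + 1) = v i
          · left
            refine ⟨updTrue n hni, hni ▸ hi, hle _ (fun m hm => (hnot m hm).2) (hni ▸ hvij)⟩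
          · by_cases hnj : π (n + 1) = v j
            · right; right
              refine ⟨updFalse n hnj, hnj ▸ hj,
                hle _ (fun m hm => (hnot m hm).1) (hnj ▸ fun hh => hvij hh.symm)⟩
            · right; left
              refine ⟨by rw [updSame n hni hnj]; exact hmem, hle _ hnot ⟨hni, hnj⟩⟩
        · -- seen `v j` last: stays outside Attr {v i}
          have hXeq : X (memTrace μ π n) = {v i} := by rw [hmem]; simp [hX]
          have hstep : π (n + 1) ∉ Attr A {v i} := by
            have := step n (by rw [hXeq]; exact hout)
            rwa [hXeq] at this
          have hni : π (n + 1) ≠ v i := fun h =>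
            hstep (h ▸ subset_attr A {v i} rfl)
          right; right
          refine ⟨?_, hstep, hle _ hnot hni⟩
          by_cases hnj : π (n + 1) = v j
          · exact updFalse n hnj
          · rw [updSame n hni hnj]; exact hmem
  -- derive the contradiction
  obtain ⟨n, hn⟩ := hreach i
  obtain ⟨m, hm⟩ := hreach j
  simp only [Set.mem_singleton_iff] at hn hm
  rcases inv (max n m) with ⟨_, _, hnot⟩ | ⟨_, hnot⟩ | ⟨_, _, hnot⟩
  · exact hnot m (le_max_right n m) hm
  · exact (hnot n (le_max_left n m)).1 hn
  · exact hnot n (le_max_left n m) hn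
end

section
/- Let G be a one-player generalized reachability game (all vertices belong to Eve) with reachability sets F_i = {x_i, y_i} of size two, and starting vertex v0 from which every F_i is reachable. Then Eve wins from v0 if and only if there exists a sequence of colored vertices v_1,...,v_k such that v_0 ⪯ v_1 ⪯ ... ⪯ v_k (where u ⪯ u' means there is a path from u to u') and each color i has a representative among v_1,...,v_k (i.e., for each i, some v_j ∈ F_i). -/
variable {V M : Type}

/-!
In a one-player arena a strategy of Eve amounts to choosing a single play, so Eve wins iff some
infinite path from `v0` meets every `F i`. Such a path yields the chain by sorting the first
hitting times of the colours; conversely, prepending the paths between consecutive vertices of a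
chain to an arbitrary infinite path from its last vertex gives a path meeting every `F i`.
-/

theorem IsPlay.reflTransGen {A : Arena V} {v : V} {π : ℕ → V} (hπ : IsPlay A v π)
    {m n : ℕ} (hmn : m ≤ n) : Relation.ReflTransGen A.E (π m) (π n) :=
  (reflTransGen_of_succ_of_le (fun a b => A.E (π a) (π b)) (fun i _ => hπ.2 i) hmn).lift π
    fun _ _ h => h

namespace Arena

variable (A : Arena V)

theorem exists_isPlay (v : V) : ∃ π, IsPlay A v π := by
  choose next hnext using A.succ_exists
  refine ⟨fun n => next^[n] v, rfl, fun n => ?_⟩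
  simpa only [Function.iterate_succ_apply'] using hnext _

variable {A}

theorem exists_isPlay_of_reflTransGen {u v : V} {π : ℕ → V}
    (huv : Relation.ReflTransGen A.E u v) (hπ : IsPlay A v π) :
    ∃ ρ N, IsPlay A u ρ ∧ ∀ n, ρ (n + N) = π n := by
  induction huv using Relation.ReflTransGen.head_induction_on with
  | refl => exact ⟨π, 0, hπ, fun _ => rfl⟩
  | head hac _ ih =>
    obtain ⟨ρ, N, ⟨hρ0, hρE⟩, hshift⟩ := ih
    refine ⟨Stream'.cons _ ρ, N + 1, ⟨rfl, ?_⟩, hshift⟩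
    rintro (_ | n)
    · show A.E _ (ρ 0)
      exact hρ0 ▸ hac
    · exact hρE n

theorem exists_isPlay_visiting_chain {k : ℕ} (w : Fin (k + 1) → V)
    (hw : ∀ i : Fin k, Relation.ReflTransGen A.E (w i.castSucc) (w i.succ)) :
    ∃ π, IsPlay A (w 0) π ∧ ∀ j, ∃ n, π n = w j := by
  induction k with
  | zero =>
    obtain ⟨π, hπ⟩ := A.exists_isPlay (w 0)
    exact ⟨π, hπ, fun j => ⟨0, by rw [Fin.fin_one_eq_zero j, hπ.1]⟩⟩
  | succ k ih =>
    obtain ⟨π, hπ, hvisit⟩ := ih (fun j => w j.succ) fun i => by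
      simpa only [Fin.succ_castSucc] using hw i.succ
    obtain ⟨ρ, N, hρ, hshift⟩ := exists_isPlay_of_reflTransGen (hw 0) hπ
    refine ⟨ρ, hρ, Fin.cases ⟨0, hρ.1⟩ fun j => ?_⟩
    obtain ⟨n, hn⟩ := hvisit j
    exact ⟨n + N, (hshift n).trans hn⟩

theorem exists_chain_of_genReach {k : ℕ} {F : Fin k → Set V} {v0 : V} {π : ℕ → V}
    (hπ : IsPlay A v0 π) (hF : GenReach F π) :
    ∃ w : Fin (k + 1) → V, w 0 = v0 ∧
      (∀ i : Fin k, Relation.ReflTransGen A.E (w i.castSucc) (w i.succ)) ∧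
      (∀ i : Fin k, ∃ j : Fin (k + 1), j ≠ 0 ∧ w j ∈ F i) := by
  choose t ht using hF
  -- visit the colours in the order of their chosen hitting times
  set s := Tuple.sort t
  have hmono : Monotone (Fin.cons 0 (t ∘ s) : Fin (k + 1) → ℕ) :=
    monotone_iff_forall_lt.2 <| (Fin.liftFun_cons (· ≤ ·)).2
      ⟨fun _ => Nat.zero_le _, monotone_iff_forall_lt.1 (Tuple.monotone_sort t)⟩
  refine ⟨π ∘ Fin.cons 0 (t ∘ s), hπ.1, fun i => ?_,
    fun i => ⟨(s.symm i).succ, Fin.succ_ne_zero _, ?_⟩⟩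
  · exact hπ.reflTransGen (hmono (Fin.castSucc_le_succ i))
  · simpa using ht i

end Arena

theorem hist_eq_append (π : ℕ → V) (n : ℕ) :
    hist π n = List.ofFn (fun i : Fin n => π i) ++ [π n] :=
  List.ofFn_succ_last

theorem hist_succ (π : ℕ → V) (n : ℕ) : hist π (n + 1) = hist π n ++ [π (n + 1)] :=
  hist_eq_append π (n + 1)

def strategyHist (σ : List V → V) (v0 : V) : ℕ → List V
  | 0 => [v0]
  | n + 1 => strategyHist σ v0 n ++ [σ (strategyHist σ v0 n)]

def strategyPlay (σ : List V → V) (v0 : V) : ℕ → V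
  | 0 => v0
  | n + 1 => σ (strategyHist σ v0 n)

theorem hist_strategyPlay (σ : List V → V) (v0 : V) (n : ℕ) :
    hist (strategyPlay σ v0) n = strategyHist σ v0 n := by
  induction n with
  | zero => rfl
  | succ n ih => rw [hist_succ, ih]; rfl

theorem strategyPlay_succ (σ : List V → V) (v0 : V) (n : ℕ) :
    strategyPlay σ v0 (n + 1) = σ (hist (strategyPlay σ v0) n) := by
  rw [hist_strategyPlay]; rfl

theorem consistentEve_strategyPlay (A : Arena V) (σ : List V → V) (v0 : V) :
    ConsistentEve A σ (strategyPlay σ v0) :=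
  fun n _ => strategyPlay_succ σ v0 n

theorem isPlay_strategyPlay {A : Arena V} {σ : List V → V} (hσ : Legal A σ) (v0 : V) :
    IsPlay A v0 (strategyPlay σ v0) := by
  refine ⟨rfl, fun n => ?_⟩
  rw [strategyPlay_succ, hist_eq_append]
  exact hσ _ _

theorem exists_isPlay_genReach_of_eveWinsGenReach {A : Arena V} {k : ℕ} {F : Fin k → Set V}
    {v0 : V} (h : EveWinsGenReach A F v0) : ∃ π, IsPlay A v0 π ∧ GenReach F π := by
  obtain ⟨σ, hσ, hwin⟩ := h
  exact ⟨_, isPlay_strategyPlay hσ v0,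
    hwin _ (isPlay_strategyPlay hσ v0) (consistentEve_strategyPlay A σ v0)⟩

/-- Eve replays `π`, moving arbitrarily once the history leaves it; as she owns every vertex,
the only play consistent with this strategy is `π` itself. -/
theorem eveWinsGenReach_of_isPlay {A : Arena V} (hone : ∀ w, A.eve w) {k : ℕ}
    {F : Fin k → Set V} {v0 : V} {π : ℕ → V} (hπ : IsPlay A v0 π) (hF : GenReach F π) :
    EveWinsGenReach A F v0 := by
  classical
  choose next hnext using A.succ_exists
  let σ : List V → V := fun l => match l.getLast? with
    | some v => if v = π (l.length - 1) then π l.length else next v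
    | none => v0
  have hσ : ∀ l v, σ (l ++ [v]) = if v = π l.length then π (l.length + 1) else next v := by
    intro l v
    simp [σ]
  refine ⟨σ, fun l v => ?_, fun ρ hρ hcons => ?_⟩
  · rw [hσ]
    split_ifs with hv
    · exact hv ▸ hπ.2 _
    · exact hnext v
  · suffices ρ = π from this ▸ hF
    funext n
    induction n with
    | zero => exact hρ.1.trans hπ.1.symm
    | succ n ih => rw [hcons n (hone _), hist_eq_append, hσ]; simp [ih]

theorem eveWinsGenReach_iff_exists_isPlay {A : Arena V} (hone : ∀ w, A.eve w) {k : ℕ}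
    {F : Fin k → Set V} {v0 : V} :
    EveWinsGenReach A F v0 ↔ ∃ π, IsPlay A v0 π ∧ GenReach F π :=
  ⟨exists_isPlay_genReach_of_eveWinsGenReach,
    fun ⟨_, hπ, hF⟩ => eveWinsGenReach_of_isPlay hone hπ hF⟩

theorem exists_isPlay_genReach_iff_exists_chain {A : Arena V} {k : ℕ} {F : Fin k → Set V}
    {v0 : V} :
    (∃ π, IsPlay A v0 π ∧ GenReach F π) ↔
      ∃ w : Fin (k + 1) → V, w 0 = v0 ∧
        (∀ i : Fin k, Relation.ReflTransGen A.E (w i.castSucc) (w i.succ)) ∧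
        (∀ i : Fin k, ∃ j : Fin (k + 1), j ≠ 0 ∧ w j ∈ F i) := by
  refine ⟨fun ⟨π, hπ, hF⟩ => Arena.exists_chain_of_genReach hπ hF, ?_⟩
  rintro ⟨w, rfl, hchain, hcover⟩
  obtain ⟨π, hπ, hvisit⟩ := Arena.exists_isPlay_visiting_chain w hchain
  refine ⟨π, hπ, fun i => ?_⟩
  obtain ⟨j, -, hj⟩ := hcover i
  obtain ⟨n, hn⟩ := hvisit j
  exact ⟨n, hn ▸ hj⟩

theorem one_player_size_two_characterization_general {V : Type} {k : ℕ}
    (A : Arena V) (hone : ∀ w, A.eve w) (x y : Fin k → V) (v0 : V) :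
    EveWinsGenReach A (fun i => {x i, y i}) v0 ↔
      ∃ w : Fin (k + 1) → V, w 0 = v0 ∧
        (∀ i : Fin k, Relation.ReflTransGen A.E (w i.castSucc) (w i.succ)) ∧
        (∀ i : Fin k, ∃ j : Fin (k + 1), j ≠ 0 ∧ w j ∈ ({x i, y i} : Set V)) :=
  (eveWinsGenReach_iff_exists_isPlay hone).trans exists_isPlay_genReach_iff_exists_chain

/-- in a one-player generalized reachability game with size-two color
sets `F_i = {x_i, y_i}`, from a vertex `v0` from which every `F_i` is reachable, Eve
wins iff there is a chain `v0 ⪯ v_1 ⪯ … ⪯ v_k` of colored vertices covering all colors,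
where `⪯` is reachability by a path. -/
theorem one_player_size_two_characterization {V : Type} [Fintype V] {k : ℕ}
    (A : Arena V) (hone : ∀ w, A.eve w) (x y : Fin k → V) (v0 : V)
    (hreach : ∀ i, ∃ u ∈ ({x i, y i} : Set V), Relation.ReflTransGen A.E v0 u) :
    EveWinsGenReach A (fun i => {x i, y i}) v0 ↔
      ∃ w : Fin (k + 1) → V, w 0 = v0 ∧
        (∀ i : Fin k, Relation.ReflTransGen A.E (w i.castSucc) (w i.succ)) ∧
        (∀ i : Fin k, ∃ j : Fin (k + 1), j ≠ 0 ∧ w j ∈ ({x i, y i} : Set V)) :=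
  one_player_size_two_characterization_general A hone x y v0
end
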